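/- Let S be a string with period d and let [b..e] ⊆ [i+d+f .. i+m−1] be any subinterval of S's index range with e−b+1 ≤ f, where S spans positions [i..i+m−1]. Then there exists k ≥ 1 such that S[b−kd..e−kd] = S[b..e] and [b−kd..e−kd] ⊆ [i..i+d+f−1]. -/
import Mathlib


/-- Let `S = T[i..i+m-1]` have period `d`, and let `[b..e]` be a window of
length `e - b + 1 ≤ f` with `i + d + f ≤ b` and `e ≤ i + m - 1`. Then there is
`k ≥ 1` such that `T[b-kd..e-kd] = T[b..e]` and
`[b-kd..e-kd] ⊆ [i..i+d+f-1]`. -/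
theorem periodic_window_shift {α : Type*} (T : ℕ → α) (i m d f b e : ℕ)
    (hd : 1 ≤ d)
    (hper : ∀ p, i ≤ p → p + d < i + m → T p = T (p + d))
    (hb : i + d + f ≤ b) (hbe : b ≤ e) (he : e < i + m) (hwin : e < b + f) :
    ∃ k, 1 ≤ k ∧ i + k * d ≤ b ∧ e < i + d + f + k * d ∧
      ∀ t, b ≤ t → t ≤ e → T t = T (t - k * d) := by
  have key : ∀ k t, i + k * d ≤ t → t < i + m → T t = T (t - k * d) := by
    intro k
    induction k with
    | zero => intro t _ _; simp
    | succ k ih =>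
      intro t h1 h2
      have hkd : (k + 1) * d = k * d + d := by ring
      have hd' : i + k * d + d ≤ t := by omega
      have e1 : T t = T (t - d) := by
        have := hper (t - d) (by omega) (by omega)
        rw [Nat.sub_add_cancel (by omega)] at this
        exact this.symm
      rw [e1, ih (t - d) (by omega) (by omega)]
      congr 1
      omega
  obtain ⟨q, r, hr, hsum⟩ : ∃ q r, r < d ∧ e - (i + d + f) = d * q + r :=
    ⟨(e - (i + d + f)) / d, (e - (i + d + f)) % d, Nat.mod_lt _ hd,
      (Nat.div_add_mod _ d).symm⟩
  have hkd : (q + 1) * d = d * q + d := by ring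
  refine ⟨q + 1, by omega, by omega, by omega, ?_⟩
  intro t ht1 ht2
  exact key (q + 1) t (by omega) (by omega)
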